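/- arXiv:2306.09520 — 3 statements merged into one kernel-verified Lean document; each statement's English description precedes it below -/
import Mathlib

section
/- For binary treatment with nominal propensity e ∈ (0,1) and complete propensity e' ∈ (0,1), if the odds ratio satisfies 1/Γ ≤ [e'/(1−e')]·[(1−e)/e] ≤ Γ for some Γ ≥ 1, then the ratio e/e' lies in the interval [e + (1/Γ)(1−e), e + Γ(1−e)]. -/
/-- MSM: if the ratio of complete-propensity odds to nominal-propensity odds lies
in `[1/Γ, Γ]`, then the weight `e/e'` lies in `[e + (1/Γ)(1-e), e + Γ(1-e)]`. -/
theorem msm_weight_bounds (Γ e e' : ℝ) (hΓ : 1 ≤ Γ)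
    (he : e ∈ Set.Ioo (0 : ℝ) 1) (he' : e' ∈ Set.Ioo (0 : ℝ) 1)
    (hlo : 1 / Γ ≤ (e' / (1 - e')) * ((1 - e) / e))
    (hhi : (e' / (1 - e')) * ((1 - e) / e) ≤ Γ) :
    e / e' ∈ Set.Icc (e + (1 / Γ) * (1 - e)) (e + Γ * (1 - e)) := by
  obtain ⟨he0, he1⟩ := he
  obtain ⟨he'0, he'1⟩ := he'
  have hΓ0 : (0:ℝ) < Γ := lt_of_lt_of_le one_pos hΓ
  have h1e : (0:ℝ) < 1 - e := by linarith
  have h1e' : (0:ℝ) < 1 - e' := by linarith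
  have hhi' : e' * (1 - e) ≤ Γ * ((1 - e') * e) := by
    have := hhi
    rw [div_mul_div_comm, div_le_iff₀ (by positivity)] at this
    linarith
  have hlo' : (1 - e') * e ≤ Γ * (e' * (1 - e)) := by
    have := hlo
    rw [div_mul_div_comm, div_le_div_iff₀ (by positivity) (by positivity)] at this
    linarith
  have hΓne : Γ ≠ 0 := ne_of_gt hΓ0
  constructor
  · rw [le_div_iff₀ he'0]
    have key : e' * (e + 1 / Γ * (1 - e)) * Γ = Γ * e * e' + (1 - e) * e' := by
      field_simp
    nlinarith [hhi', key]
  · rw [div_le_iff₀ he'0]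
    nlinarith [hlo', mul_pos he'0 h1e]
end

section
/- Let F_1, …, F_m : ℝ → [0,1] be continuous strictly increasing CDFs, and consider weight vectors ω with ω_i ∈ [a,b], 0 < a ≤ 1 ≤ b, and (1/m)∑ω_i = 1. If ω maximizes the β-quantile q (defined by (1/m)∑ω_i F_i(q) = β) over all admissible weight vectors, then there is no pair (j,k) with ω_j > a, ω_k < b, and F_j(q) > F_k(q). -/
open Finset

/-- Necessary global-optimality condition: if an admissible weight vector maximizes the
`β`-quantile of the mixture, then there is no pair `(j,k)` with `ω j > a`, `ω k < b`,
and `F j q > F k q`. -/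
theorem optimal_weights_no_transferable_pair (m : ℕ) (F : Fin m → ℝ → ℝ)
    (hcont : ∀ i, Continuous (F i)) (hmono : ∀ i, StrictMono (F i))
    (hrange : ∀ i y, F i y ∈ Set.Icc (0 : ℝ) 1)
    (a b : ℝ) (ha : 0 < a) (ha1 : a ≤ 1) (hb1 : 1 ≤ b)
    (β : ℝ) (hβ : β ∈ Set.Ioo (0 : ℝ) 1)
    (ω : Fin m → ℝ) (hω : ∀ i, ω i ∈ Set.Icc a b)
    (hωsum : (1 / (m : ℝ)) * ∑ i, ω i = 1)
    (q : ℝ) (hq : (1 / (m : ℝ)) * ∑ i, ω i * F i q = β)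
    (hmax : ∀ ω' : Fin m → ℝ, (∀ i, ω' i ∈ Set.Icc a b) →
      (1 / (m : ℝ)) * ∑ i, ω' i = 1 →
      ∀ q' : ℝ, (1 / (m : ℝ)) * ∑ i, ω' i * F i q' = β → q' ≤ q) :
    ¬ ∃ j k : Fin m, a < ω j ∧ ω k < b ∧ F k q < F j q := by
  rintro ⟨j, k, hja, hkb, hFjk⟩
  have hm : 0 < m := j.pos
  have hmR : (0 : ℝ) < m := Nat.cast_pos.mpr hm
  have hjk : j ≠ k := by rintro rfl; exact lt_irrefl _ hFjk
  have hωpos : ∀ i, 0 < ω i := fun i => lt_of_lt_of_le ha (hω i).1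
  set M : ℝ := (1 / (m : ℝ)) * ∑ i, ω i * F i (q + 1) with hM
  have hMβ : β < M := by
    rw [← hq]
    apply mul_lt_mul_of_pos_left _ (by positivity)
    apply Finset.sum_lt_sum_of_nonempty ⟨j, mem_univ j⟩
    intro i _
    exact mul_lt_mul_of_pos_left (hmono i (by linarith)) (hωpos i)
  set ε : ℝ := min (ω j - a) (min (b - ω k) ((m : ℝ) * (M - β) / 2)) with hεdef
  have hεpos : 0 < ε := by
    apply lt_min (by linarith) (lt_min (by linarith) _)
    have : 0 < M - β := by linarith
    positivity
  have hε1 : ε ≤ ω j - a := min_le_left _ _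
  have hε2 : ε ≤ b - ω k := le_trans (min_le_right _ _) (min_le_left _ _)
  have hε3 : ε ≤ (m : ℝ) * (M - β) / 2 := le_trans (min_le_right _ _) (min_le_right _ _)
  set ω' : Fin m → ℝ :=
    fun i => ω i + ε * ((if i = k then 1 else 0) - (if i = j then 1 else 0)) with hω'def
  have hω'mem : ∀ i, ω' i ∈ Set.Icc a b := by
    intro i
    by_cases hij : i = j
    · subst hij
      have : ω' i = ω i - ε := by simp [hω'def, hjk]; ring
      rw [this]
      exact ⟨by linarith, by linarith [(hω i).2]⟩
    · by_cases hik : i = k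
      · subst hik
        have : ω' i = ω i + ε := by simp [hω'def, Ne.symm hjk]
        rw [this]
        exact ⟨by linarith [(hω i).1], by linarith⟩
      · have : ω' i = ω i := by simp [hω'def, hij, hik]
        rw [this]
        exact hω i
  have hsum : ∀ g : Fin m → ℝ, ∑ i, ω' i * g i = (∑ i, ω i * g i) + ε * (g k - g j) := by
    intro g
    have hpt : ∀ i ∈ univ, ω' i * g i
        = ω i * g i + ((if i = k then ε * g i else 0) - (if i = j then ε * g i else 0)) := by
      intro i _
      by_cases hik : i = k <;> by_cases hij : i = j <;>
        simp [hω'def, hik, hij, hjk, Ne.symm hjk] <;> ring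
    rw [Finset.sum_congr rfl hpt, Finset.sum_add_distrib, Finset.sum_sub_distrib]
    simp [Finset.sum_ite_eq', mul_sub]
  have hω'sum : (1 / (m : ℝ)) * ∑ i, ω' i = 1 := by
    have h1 : ∑ i, ω' i * (fun _ : Fin m => (1 : ℝ)) i
        = (∑ i, ω i * (fun _ : Fin m => (1 : ℝ)) i) + ε * (1 - 1) := hsum _
    simp only [mul_one] at h1
    rw [h1]
    simpa using hωsum
  set G : ℝ → ℝ := fun y => (1 / (m : ℝ)) * ∑ i, ω' i * F i y with hGdef
  have hGq : G q < β := by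
    have h1 : G q = (1 / (m : ℝ)) * ((∑ i, ω i * F i q) + ε * (F k q - F j q)) := by
      simp only [hGdef]; rw [hsum (fun i => F i q)]
    have h2 : (1 / (m : ℝ)) * (F k q - F j q) < 0 := by
      apply mul_neg_of_pos_of_neg (by positivity)
      linarith
    have : G q = β + ε * ((1 / (m : ℝ)) * (F k q - F j q)) := by
      rw [h1, ← hq]; ring
    rw [this]
    nlinarith
  have hGq1 : β < G (q + 1) := by
    have h1 : G (q + 1) = M + (1 / (m : ℝ)) * (ε * (F k (q + 1) - F j (q + 1))) := by
      simp only [hGdef]; rw [hsum (fun i => F i (q + 1)), hM]; ring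
    have hk0 := (hrange k (q + 1)).1
    have hj1 := (hrange j (q + 1)).2
    have hd : F k (q + 1) - F j (q + 1) ≥ -1 := by linarith
    have : ε * (F k (q + 1) - F j (q + 1)) ≥ -ε := by nlinarith
    have hεm : (1 / (m : ℝ)) * ε ≤ (M - β) / 2 := by
      rw [div_mul_eq_mul_div, one_mul, div_le_div_iff₀ hmR (by norm_num : (0:ℝ) < 2)]
      linarith [hε3]
    have h2 : (1 / (m : ℝ)) * (ε * (F k (q + 1) - F j (q + 1))) ≥ (1 / (m : ℝ)) * (-ε) := by
      apply mul_le_mul_of_nonneg_left this (by positivity)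
    rw [h1]
    have : (1 / (m : ℝ)) * (-ε) = -((1 / (m : ℝ)) * ε) := by ring
    nlinarith
  have hGcont : Continuous G := by
    apply continuous_const.mul
    exact continuous_finset_sum _ (fun i _ => continuous_const.mul (hcont i))
  obtain ⟨q', hq'mem, hq'eq⟩ :=
    intermediate_value_Icc (by linarith : q ≤ q + 1) hGcont.continuousOn
      ⟨le_of_lt hGq, le_of_lt hGq1⟩
  have hq'gt : q < q' := by
    rcases lt_or_eq_of_le hq'mem.1 with h | h
    · exact h
    · exfalso; rw [← h] at hq'eq; exact absurd hq'eq (ne_of_lt hGq)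
  have := hmax ω' hω'mem hω'sum q' hq'eq
  linarith
end

section
/- With the notation of the greedy algorithm, if at the current quantile q the condition 'receiver index r has minimal F_r(q) among components with ω_i < b, sender index s has maximal F_s(q) among components with ω_i > a, and F_s(q) > F_r(q)' holds, then after transferring Δ = min(b − ω_r, ω_s − a) from s to r, the new mixture CDF value at q strictly decreases: F_{ω'}(q) = F_ω(q) − (Δ/m)(F_s(q) − F_r(q)) < F_ω(q). -/
open Finset

/-- One step of the greedy algorithm: transferring `Δ = min (b − ω r) (ω s − a)` from the
sender `s` (maximal CDF mass at `q` among components with weight above `a`) to the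
receiver `r` (minimal CDF mass at `q` among components with weight below `b`) decreases
the mixture CDF at `q` by exactly `(Δ/m)(F s q − F r q) > 0`. -/
theorem greedy_step_strict_decrease (m : ℕ) (F : Fin m → ℝ → ℝ)
    (hrange : ∀ i y, F i y ∈ Set.Icc (0 : ℝ) 1)
    (a b : ℝ) (ha : 0 < a) (ha1 : a ≤ 1) (hb1 : 1 ≤ b)
    (ω : Fin m → ℝ) (hω : ∀ i, ω i ∈ Set.Icc a b)
    (hωsum : (1 / (m : ℝ)) * ∑ i, ω i = 1)
    (β : ℝ) (q : ℝ) (hq : (1 / (m : ℝ)) * ∑ i, ω i * F i q = β)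
    (r s : Fin m) (hr : ω r < b) (hs : a < ω s)
    (hrmin : ∀ i, ω i < b → F r q ≤ F i q)
    (hsmax : ∀ i, a < ω i → F i q ≤ F s q)
    (hrs : F r q < F s q) :
    ∀ ω' : Fin m → ℝ,
      ω' = Function.update (Function.update ω s (ω s - min (b - ω r) (ω s - a))) r
            (ω r + min (b - ω r) (ω s - a)) →
      (1 / (m : ℝ)) * ∑ i, ω' i * F i q
          = (1 / (m : ℝ)) * ∑ i, ω i * F i q
              - (min (b - ω r) (ω s - a) / (m : ℝ)) * (F s q - F r q) ∧
      (1 / (m : ℝ)) * ∑ i, ω' i * F i q < (1 / (m : ℝ)) * ∑ i, ω i * F i q := by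
  intro w' hw'
  subst hw'
  set Δ := min (b - ω r) (ω s - a) with hΔ
  have hrs' : r ≠ s := fun h => by rw [h] at hrs; exact lt_irrefl _ hrs
  have hm : (0 : ℝ) < m := by exact_mod_cast r.pos
  have hΔpos : 0 < Δ := lt_min (by linarith) (by linarith)
  have h1 : ∀ (t : Finset (Fin m)) (f : Fin m → ℝ) (j : Fin m) (v : ℝ), j ∈ t →
      (∑ i ∈ t, Function.update f j v i * F i q) = v * F j q + ∑ i ∈ t.erase j, f i * F i q := by
    intro t f j v hj
    rw [← Finset.add_sum_erase _ (fun i => Function.update f j v i * F i q) hj]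
    congr 1
    · simp
    · exact Finset.sum_congr rfl fun i hi => by
        rw [Function.update_of_ne (Finset.ne_of_mem_erase hi)]
  have hsr : s ∈ (univ : Finset (Fin m)).erase r :=
    Finset.mem_erase.2 ⟨fun h => hrs' h.symm, mem_univ s⟩
  have key : ∑ i, Function.update (Function.update ω s (ω s - Δ)) r (ω r + Δ) i * F i q
      = ∑ i, ω i * F i q + Δ * F r q - Δ * F s q := by
    rw [h1 univ _ r (ω r + Δ) (mem_univ r), h1 _ ω s (ω s - Δ) hsr]
    have horig : ∑ i, ω i * F i q
        = ω r * F r q + (ω s * F s q + ∑ i ∈ (univ.erase r).erase s, ω i * F i q) := by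
      rw [← Finset.add_sum_erase _ _ (mem_univ r), ← Finset.add_sum_erase _ _ hsr]
    rw [horig]; ring
  have heq : (1 / (m : ℝ)) * ∑ i, Function.update (Function.update ω s (ω s - Δ)) r (ω r + Δ) i * F i q
      = (1 / (m : ℝ)) * ∑ i, ω i * F i q - (Δ / (m : ℝ)) * (F s q - F r q) := by
    rw [key]; field_simp; ring
  refine ⟨heq, ?_⟩
  rw [heq]
  have : 0 < (Δ / (m : ℝ)) * (F s q - F r q) :=
    mul_pos (div_pos hΔpos hm) (by linarith)
  linarith
end
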